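/- Let D, Q ∈ ℕ₊, let α_1,…,α_Q ≥ 0, ω_1,…,ω_Q ∈ ℝ^D, and let Σ_1,…,Σ_Q be real symmetric positive definite D×D matrices. Then for every τ ∈ ℝ^D, ∫_{ℝ^D} exp(2πi ω·τ) · (1/2) Σ_{q=1}^Q α_q (N(ω | ω_q, Σ_q) + N(ω | −ω_q, Σ_q)) dω = Σ_{q=1}^Q α_q exp(−2π² τᵀ Σ_q τ) cos(2π ω_q·τ). That is, the spectral mixture kernel is the inverse Fourier transform of the symmetric Gaussian mixture spectral density. -/

import Mathlib

open MeasureTheory Matrix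
open scoped BigOperators

noncomputable section

/-- Euclidean dot product on `ℝ^D`. -/
def dotR {D : ℕ} (x y : Fin D → ℝ) : ℝ := ∑ d, x d * y d

/-- The multivariate Gaussian density `N(v | m, Σ)`. -/
def gaussD {D : ℕ} (S : Matrix (Fin D) (Fin D) ℝ) (m v : Fin D → ℝ) : ℝ :=
  (2 * Real.pi) ^ (-(D : ℝ) / 2) * S.det ^ (-(1 : ℝ) / 2) *
    Real.exp (-((v - m) ⬝ᵥ (S⁻¹ *ᵥ (v - m))) / 2)

lemma integral_comp_mulVec {D : ℕ} (A : Matrix (Fin D) (Fin D) ℝ) (hA : A.det ≠ 0)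
    (g : (Fin D → ℝ) → ℂ) :
    ∫ x : Fin D → ℝ, g (A *ᵥ x) = |A.det|⁻¹ • ∫ y, g y := by
  have hdet : LinearMap.det (Matrix.toLin' A) ≠ 0 := by rwa [LinearMap.det_toLin']
  let e := (Matrix.toLin' A).equivOfDetNeZero hdet
  let me := e.toContinuousLinearEquiv.toHomeomorph.toMeasurableEquiv
  have hme : (⇑me : (Fin D → ℝ) → (Fin D → ℝ)) = fun x => A *ᵥ x := by
    ext x i
    simp [me, e, Matrix.toLin'_apply]
  have h1 : ∫ x, g (me x) = ∫ y, g y ∂(Measure.map me volume) :=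
    (MeasureTheory.integral_map_equiv me g).symm
  have h2 : Measure.map (⇑me) volume
      = ENNReal.ofReal |(LinearMap.det (Matrix.toLin' A))⁻¹| • volume := by
    rw [hme]
    have h := Measure.map_linearMap_addHaar_eq_smul_addHaar (volume : Measure (Fin D → ℝ)) hdet
    convert h using 2
    · rfl
    · exact funext fun x => (Matrix.toLin'_apply A x).symm
  rw [hme] at h2
  rw [hme] at h1
  rw [h1, h2, integral_smul_measure, ENNReal.toReal_ofReal (abs_nonneg _),
    LinearMap.det_toLin', abs_inv]

lemma integrable_comp_mulVec_iff {D : ℕ} (A : Matrix (Fin D) (Fin D) ℝ) (hA : A.det ≠ 0)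
    (g : (Fin D → ℝ) → ℂ) :
    Integrable (fun x : Fin D → ℝ => g (A *ᵥ x)) ↔ Integrable g := by
  have hdet : LinearMap.det (Matrix.toLin' A) ≠ 0 := by rwa [LinearMap.det_toLin']
  let e := (Matrix.toLin' A).equivOfDetNeZero hdet
  let me := e.toContinuousLinearEquiv.toHomeomorph.toMeasurableEquiv
  have hme : (⇑me : (Fin D → ℝ) → (Fin D → ℝ)) = fun x => A *ᵥ x := by
    ext x i
    simp [me, e, Matrix.toLin'_apply]
  have h2 : Measure.map (⇑me) volume
      = ENNReal.ofReal |(LinearMap.det (Matrix.toLin' A))⁻¹| • volume := by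
    rw [hme]
    have h := Measure.map_linearMap_addHaar_eq_smul_addHaar (volume : Measure (Fin D → ℝ)) hdet
    convert h using 2
    · rfl
    · exact funext fun x => (Matrix.toLin'_apply A x).symm
  have h1 := MeasureTheory.integrable_map_equiv (μ := volume) me g
  rw [h2, hme] at h1
  have hc : ENNReal.ofReal |(LinearMap.det (Matrix.toLin' A))⁻¹| ≠ 0 := by
    rw [Ne, ENNReal.ofReal_eq_zero, not_le]
    exact abs_pos.mpr (inv_ne_zero hdet)
  rw [integrable_smul_measure hc ENNReal.ofReal_ne_top] at h1
  exact h1.symm.trans (by simp [Function.comp])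

lemma gauss_fourier {D : ℕ} {S : Matrix (Fin D) (Fin D) ℝ} (hS : S.PosDef) (m τ : Fin D → ℝ) :
    Integrable (fun w : Fin D → ℝ =>
      Complex.exp (2 * (Real.pi : ℂ) * Complex.I * ((dotR w τ : ℝ) : ℂ)) * ((gaussD S m w : ℝ) : ℂ)) ∧
    (∫ w : Fin D → ℝ,
      Complex.exp (2 * (Real.pi : ℂ) * Complex.I * ((dotR w τ : ℝ) : ℂ)) * ((gaussD S m w : ℝ) : ℂ))
      = Complex.exp (2 * (Real.pi : ℂ) * Complex.I * ((dotR m τ : ℝ) : ℂ)) *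
        ((Real.exp (-(2 * Real.pi ^ 2) * (τ ⬝ᵥ S *ᵥ τ)) : ℝ) : ℂ) := by
  classical
  set A := (open scoped MatrixOrder in CFC.sqrt S : Matrix (Fin D) (Fin D) ℝ) with hAdef
  have hApsd : A.PosSemidef := by open scoped MatrixOrder in exact (CFC.sqrt_nonneg S).posSemidef
  have hAT : Aᵀ = A := by
    ext i j
    have := congrFun (congrFun hApsd.isHermitian i) j
    simpa using this
  have hAA : A * A = S := by
    open scoped MatrixOrder in exact CFC.sqrt_mul_sqrt_self S hS.posSemidef.nonneg
  have hdS : 0 < S.det := hS.det_pos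
  have hdA : A.det * A.det = S.det := by rw [← Matrix.det_mul, hAA]
  have hdA0 : 0 ≤ A.det := by
    rw [hApsd.isHermitian.det_eq_prod_eigenvalues]
    exact Finset.prod_nonneg fun i _ => hApsd.eigenvalues_nonneg i
  have hA0 : A.det ≠ 0 := by
    intro h
    rw [h, mul_zero] at hdA
    exact hdS.ne hdA
  have hAdetpos : 0 < A.det := lt_of_le_of_ne hdA0 (Ne.symm hA0)
  have hSinv : S⁻¹ = A⁻¹ * A⁻¹ := by rw [← hAA, Matrix.mul_inv_rev]
  -- dot product facts
  have hdotR : ∀ x y : Fin D → ℝ, dotR x y = x ⬝ᵥ y := fun x y => rfl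
  have hvA : ∀ x : Fin D → ℝ, x ᵥ* A = A *ᵥ x := by
    intro x
    rw [← Matrix.mulVec_transpose, hAT]
  have f1 : ∀ u : Fin D → ℝ, dotR (A *ᵥ u + m) τ = u ⬝ᵥ (A *ᵥ τ) + dotR m τ := by
    intro u
    rw [hdotR, hdotR, add_dotProduct]
    congr 1
    rw [dotProduct_comm, dotProduct_mulVec, hvA, dotProduct_comm]
  have f2 : ∀ u : Fin D → ℝ,
      ((A *ᵥ u + m) - m) ⬝ᵥ (S⁻¹ *ᵥ ((A *ᵥ u + m) - m)) = u ⬝ᵥ u := by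
    intro u
    rw [add_sub_cancel_right, hSinv, Matrix.mulVec_mulVec, mul_assoc,
      Matrix.nonsing_inv_mul A (isUnit_iff_ne_zero.mpr hA0), mul_one]
    rw [dotProduct_comm, dotProduct_mulVec, hvA, Matrix.mulVec_mulVec,
      Matrix.mul_nonsing_inv A (isUnit_iff_ne_zero.mpr hA0), Matrix.one_mulVec]
  have f3 : (A *ᵥ τ) ⬝ᵥ (A *ᵥ τ) = τ ⬝ᵥ (S *ᵥ τ) := by
    rw [dotProduct_mulVec, hvA, Matrix.mulVec_mulVec, hAA, dotProduct_comm]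
  set c : Fin D → ℂ := fun i => 2 * (Real.pi : ℂ) * Complex.I * (((A *ᵥ τ) i : ℝ) : ℂ) with hc
  set K : ℂ := Complex.exp (2 * (Real.pi : ℂ) * Complex.I * ((dotR m τ : ℝ) : ℂ)) *
      (((2 * Real.pi) ^ (-(D : ℝ) / 2) * S.det ^ (-(1 : ℝ) / 2) : ℝ) : ℂ) with hK
  have hbre : (0 : ℝ) < (1 / 2 : ℂ).re := by norm_num
  have hsum1 : ∀ u : Fin D → ℝ, ∑ i, ((u i : ℝ) : ℂ) ^ 2 = ((u ⬝ᵥ u : ℝ) : ℂ) := by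
    intro u
    push_cast [dotProduct]
    exact Finset.sum_congr rfl fun i _ => sq (u i : ℂ)
  have hsum2 : ∀ u : Fin D → ℝ, ∑ i, c i * ((u i : ℝ) : ℂ)
      = 2 * (Real.pi : ℂ) * Complex.I * ((u ⬝ᵥ (A *ᵥ τ) : ℝ) : ℂ) := by
    intro u
    rw [hc]
    push_cast [dotProduct]
    rw [Finset.mul_sum]
    exact Finset.sum_congr rfl fun i _ => by ring
  have key : ∀ u : Fin D → ℝ,
      Complex.exp (2 * (Real.pi : ℂ) * Complex.I * ((dotR (A *ᵥ u + m) τ : ℝ) : ℂ)) *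
        ((gaussD S m (A *ᵥ u + m) : ℝ) : ℂ)
      = K * Complex.exp (-(1 / 2 : ℂ) * ∑ i, ((u i : ℝ) : ℂ) ^ 2 + ∑ i, c i * ((u i : ℝ) : ℂ)) := by
    intro u
    have hX : Complex.exp (2 * (Real.pi : ℂ) * Complex.I * ((dotR (A *ᵥ u + m) τ : ℝ) : ℂ))
        = Complex.exp (2 * (Real.pi : ℂ) * Complex.I * ((dotR m τ : ℝ) : ℂ)) *
          Complex.exp (2 * (Real.pi : ℂ) * Complex.I * ((u ⬝ᵥ (A *ᵥ τ) : ℝ) : ℂ)) := by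
      rw [← Complex.exp_add, f1 u]
      congr 1
      push_cast
      ring
    have hG : ((gaussD S m (A *ᵥ u + m) : ℝ) : ℂ)
        = (((2 * Real.pi) ^ (-(D : ℝ) / 2) * S.det ^ (-(1 : ℝ) / 2) : ℝ) : ℂ) *
          Complex.exp (((-(u ⬝ᵥ u) / 2 : ℝ)) : ℂ) := by
      rw [gaussD, f2 u]
      push_cast
      ring
    have hW : Complex.exp (-(1 / 2 : ℂ) * ∑ i, ((u i : ℝ) : ℂ) ^ 2 + ∑ i, c i * ((u i : ℝ) : ℂ))
        = Complex.exp (2 * (Real.pi : ℂ) * Complex.I * ((u ⬝ᵥ (A *ᵥ τ) : ℝ) : ℂ)) *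
          Complex.exp (((-(u ⬝ᵥ u) / 2 : ℝ)) : ℂ) := by
      rw [← Complex.exp_add]
      congr 1
      rw [hsum1 u, hsum2 u]
      push_cast
      ring
    rw [hX, hG, hW, hK]
    ring
  have hsumc : (∑ i, c i ^ 2) / (4 * (1 / 2 : ℂ))
      = ((-(2 * Real.pi ^ 2) * (τ ⬝ᵥ S *ᵥ τ) : ℝ) : ℂ) := by
    have h1 : ∑ i, c i ^ 2 = (2 * (Real.pi : ℂ) * Complex.I) ^ 2 * (((τ ⬝ᵥ S *ᵥ τ : ℝ)) : ℂ) := by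
      rw [← f3, hc]
      push_cast [dotProduct]
      rw [Finset.mul_sum]
      exact Finset.sum_congr rfl fun i _ => by ring
    rw [h1]
    have : Complex.I ^ 2 = -1 := Complex.I_sq
    field_simp
    ring_nf
    rw [Complex.I_sq]
    push_cast
    ring
  -- integrability of the standard Gaussian integrand
  have hintstd := GaussianFourier.integrable_cexp_neg_mul_sum_add (b := (1 / 2 : ℂ)) hbre c
  have hIone : Integrable (fun u : Fin D → ℝ =>
      K * Complex.exp (-(1 / 2 : ℂ) * ∑ i, ((u i : ℝ) : ℂ) ^ 2 + ∑ i, c i * ((u i : ℝ) : ℂ))) := by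
    exact hintstd.const_mul K
  have hkeyfun : (fun u : Fin D → ℝ =>
        Complex.exp (2 * (Real.pi : ℂ) * Complex.I * ((dotR (A *ᵥ u + m) τ : ℝ) : ℂ)) *
          ((gaussD S m (A *ᵥ u + m) : ℝ) : ℂ))
      = fun u : Fin D → ℝ =>
        K * Complex.exp (-(1 / 2 : ℂ) * ∑ i, ((u i : ℝ) : ℂ) ^ 2 + ∑ i, c i * ((u i : ℝ) : ℂ)) :=
    funext key
  set F : (Fin D → ℝ) → ℂ := fun w =>
    Complex.exp (2 * (Real.pi : ℂ) * Complex.I * ((dotR w τ : ℝ) : ℂ)) * ((gaussD S m w : ℝ) : ℂ)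
    with hF
  have hshift : Integrable (fun v : Fin D → ℝ => F (v + m)) := by
    refine (integrable_comp_mulVec_iff A hA0 (fun v => F (v + m))).mp ?_
    have : (fun x : Fin D → ℝ => F (A *ᵥ x + m)) = fun u : Fin D → ℝ =>
        K * Complex.exp (-(1 / 2 : ℂ) * ∑ i, ((u i : ℝ) : ℂ) ^ 2 + ∑ i, c i * ((u i : ℝ) : ℂ)) := by
      rw [← hkeyfun]
    exact this ▸ hIone
  have hIF : Integrable F := by
    have hmap : Measure.map (⇑(MeasurableEquiv.addRight m)) (volume : Measure (Fin D → ℝ))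
        = volume := (measurePreserving_add_right volume m).map_eq
    have h := MeasureTheory.integrable_map_equiv (μ := (volume : Measure (Fin D → ℝ)))
      (MeasurableEquiv.addRight m) F
    rw [hmap] at h
    exact h.mpr hshift
  refine ⟨hIF, ?_⟩
  have step1 : ∫ w, F w = ∫ v, F (v + m) := (integral_add_right_eq_self F m).symm
  have step2 : ∫ v, F (v + m) = |A.det| • ∫ x : Fin D → ℝ, F (A *ᵥ x + m) := by
    rw [integral_comp_mulVec A hA0 (fun v => F (v + m)), smul_smul,
      mul_inv_cancel₀ (abs_ne_zero.mpr hA0), one_smul]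
  have step3 : ∫ x : Fin D → ℝ, F (A *ᵥ x + m)
      = K * ((↑Real.pi / (1 / 2 : ℂ)) ^ ((Fintype.card (Fin D) : ℂ) / 2) *
          Complex.exp ((∑ i, c i ^ 2) / (4 * (1 / 2 : ℂ)))) := by
    calc ∫ x : Fin D → ℝ, F (A *ᵥ x + m)
        = ∫ u : Fin D → ℝ,
            K * Complex.exp (-(1 / 2 : ℂ) * ∑ i, ((u i : ℝ) : ℂ) ^ 2 + ∑ i, c i * ((u i : ℝ) : ℂ)) := by
          exact congrArg (fun g => ∫ u, g u) hkeyfun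
      _ = K * ∫ u : Fin D → ℝ,
            Complex.exp (-(1 / 2 : ℂ) * ∑ i, ((u i : ℝ) : ℂ) ^ 2 + ∑ i, c i * ((u i : ℝ) : ℂ)) :=
          integral_const_mul _ _
      _ = _ := by
          rw [show (∫ u : Fin D → ℝ,
              Complex.exp (-(1 / 2 : ℂ) * ∑ i, ((u i : ℝ) : ℂ) ^ 2 + ∑ i, c i * ((u i : ℝ) : ℂ)))
              = ∫ u : Fin D → ℝ,
              Complex.exp (-(1 / 2 : ℂ) * ∑ i, ((u i : ℝ) : ℂ) ^ 2 + ∑ i, c i * ((u i : ℝ) : ℂ)) from rfl]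
          rw [GaussianFourier.integral_cexp_neg_mul_sum_add hbre c]
  rw [step1, step2, step3, hsumc]
  -- now pure constant algebra
  have hP : ((Real.pi : ℂ) / (1 / 2 : ℂ)) ^ ((Fintype.card (Fin D) : ℂ) / 2)
      = (((2 * Real.pi) ^ ((D : ℝ) / 2) : ℝ) : ℂ) := by
    have h2 : ((Real.pi : ℂ) / (1 / 2 : ℂ)) = ((2 * Real.pi : ℝ) : ℂ) := by
      push_cast
      ring
    have h3 : ((Fintype.card (Fin D) : ℂ) / 2) = (((D : ℝ) / 2 : ℝ) : ℂ) := by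
      push_cast [Fintype.card_fin]
      ring
    rw [h2, h3, ← Complex.ofReal_cpow (by positivity)]
  rw [hP, hK]
  have hAdet_eq : A.det = S.det ^ ((1 : ℝ) / 2) := by
    have h := Real.sqrt_mul_self hdA0
    rw [hdA] at h
    rw [← h, Real.sqrt_eq_rpow]
  have hconst : S.det ^ ((1 : ℝ) / 2) * ((2 * Real.pi) ^ (-(D : ℝ) / 2) * S.det ^ (-(1 : ℝ) / 2)) *
      (2 * Real.pi) ^ ((D : ℝ) / 2) = 1 := by
    have e1 : S.det ^ ((1 : ℝ) / 2) * S.det ^ (-(1 : ℝ) / 2) = 1 := by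
      rw [← Real.rpow_add hdS]
      norm_num
    have e2 : (2 * Real.pi) ^ (-(D : ℝ) / 2) * (2 * Real.pi) ^ ((D : ℝ) / 2) = 1 := by
      rw [← Real.rpow_add (by positivity), show (-(D : ℝ) / 2 + (D : ℝ) / 2) = 0 from by ring,
        Real.rpow_zero]
    calc S.det ^ ((1 : ℝ) / 2) * ((2 * Real.pi) ^ (-(D : ℝ) / 2) * S.det ^ (-(1 : ℝ) / 2)) *
          (2 * Real.pi) ^ ((D : ℝ) / 2)
        = (S.det ^ ((1 : ℝ) / 2) * S.det ^ (-(1 : ℝ) / 2)) *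
          ((2 * Real.pi) ^ (-(D : ℝ) / 2) * (2 * Real.pi) ^ ((D : ℝ) / 2)) := by ring
      _ = 1 := by rw [e1, e2, mul_one]
  have hconstC : ((A.det : ℝ) : ℂ) *
      (((2 * Real.pi) ^ (-(D : ℝ) / 2) * S.det ^ (-(1 : ℝ) / 2) : ℝ) : ℂ) *
      (((2 * Real.pi) ^ ((D : ℝ) / 2) : ℝ) : ℂ) = 1 := by
    rw [← Complex.ofReal_mul, ← Complex.ofReal_mul, hAdet_eq, hconst, Complex.ofReal_one]
  rw [abs_of_pos hAdetpos, Complex.real_smul, ← Complex.ofReal_exp]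
  linear_combination (Complex.exp (2 * (Real.pi : ℂ) * Complex.I * ((dotR m τ : ℝ) : ℂ)) *
    ((Real.exp (-(2 * Real.pi ^ 2) * (τ ⬝ᵥ S *ᵥ τ)) : ℝ) : ℂ)) * hconstC

/-- The spectral mixture kernel is the inverse Fourier transform of its symmetric
Gaussian mixture spectral density:
`∫ exp(2πi⟨ω,τ⟩) · ½ ∑ q, α q (N(ω | ω_q, Σ_q) + N(ω | -ω_q, Σ_q)) dω
  = ∑ q, α q exp(-2π² τᵀ Σ_q τ) cos(2π ⟨ω_q, τ⟩)`. -/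
theorem spectral_mixture_inverse_fourier (D Q : ℕ) (hD : 0 < D) (hQ : 0 < Q)
    (α : Fin Q → ℝ) (hα : ∀ q, 0 ≤ α q)
    (ω : Fin Q → Fin D → ℝ)
    (S : Fin Q → Matrix (Fin D) (Fin D) ℝ) (hS : ∀ q, (S q).PosDef)
    (τ : Fin D → ℝ) :
    (∫ w : Fin D → ℝ,
        Complex.exp (2 * (Real.pi : ℂ) * Complex.I * ((dotR w τ : ℝ) : ℂ)) *
          (((1 / 2 : ℝ) * ∑ q, α q * (gaussD (S q) (ω q) w + gaussD (S q) (-ω q) w) : ℝ) : ℂ))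
      = ((∑ q, α q * Real.exp (-(2 * Real.pi ^ 2) * (τ ⬝ᵥ (S q *ᵥ τ))) *
            Real.cos (2 * Real.pi * dotR (ω q) τ) : ℝ) : ℂ) := by
  have hp := fun q => gauss_fourier (hS q) (ω q) τ
  have hm := fun q => gauss_fourier (hS q) (-ω q) τ
  have hfun : (fun w : Fin D → ℝ =>
      Complex.exp (2 * (Real.pi : ℂ) * Complex.I * ((dotR w τ : ℝ) : ℂ)) *
        (((1 / 2 : ℝ) * ∑ q, α q * (gaussD (S q) (ω q) w + gaussD (S q) (-ω q) w) : ℝ) : ℂ))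
      = fun w : Fin D → ℝ => ∑ q, ((α q / 2 : ℝ) : ℂ) *
          (Complex.exp (2 * (Real.pi : ℂ) * Complex.I * ((dotR w τ : ℝ) : ℂ)) *
              ((gaussD (S q) (ω q) w : ℝ) : ℂ) +
            Complex.exp (2 * (Real.pi : ℂ) * Complex.I * ((dotR w τ : ℝ) : ℂ)) *
              ((gaussD (S q) (-ω q) w : ℝ) : ℂ)) := by
    funext w
    push_cast
    rw [Finset.mul_sum, Finset.mul_sum]
    exact Finset.sum_congr rfl fun q _ => by ring
  rw [hfun, integral_finset_sum (f := fun (q : Fin Q) (w : Fin D → ℝ) =>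
      ((α q / 2 : ℝ) : ℂ) *
        (Complex.exp (2 * (Real.pi : ℂ) * Complex.I * ((dotR w τ : ℝ) : ℂ)) *
            ((gaussD (S q) (ω q) w : ℝ) : ℂ) +
          Complex.exp (2 * (Real.pi : ℂ) * Complex.I * ((dotR w τ : ℝ) : ℂ)) *
            ((gaussD (S q) (-ω q) w : ℝ) : ℂ))) Finset.univ (fun q _ =>
    (((hp q).1.add (hm q).1).const_mul ((α q / 2 : ℝ) : ℂ)))]
  have hterm : ∀ q : Fin Q,
      (∫ w : Fin D → ℝ, ((α q / 2 : ℝ) : ℂ) *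
          (Complex.exp (2 * (Real.pi : ℂ) * Complex.I * ((dotR w τ : ℝ) : ℂ)) *
              ((gaussD (S q) (ω q) w : ℝ) : ℂ) +
            Complex.exp (2 * (Real.pi : ℂ) * Complex.I * ((dotR w τ : ℝ) : ℂ)) *
              ((gaussD (S q) (-ω q) w : ℝ) : ℂ)))
      = ((α q * Real.exp (-(2 * Real.pi ^ 2) * (τ ⬝ᵥ (S q *ᵥ τ))) *
            Real.cos (2 * Real.pi * dotR (ω q) τ) : ℝ) : ℂ) := by
    intro q
    rw [integral_const_mul, integral_add (hp q).1 (hm q).1, (hp q).2, (hm q).2]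
    have hneg : dotR (-ω q) τ = -dotR (ω q) τ := by
      simp [dotR, neg_mul, Finset.sum_neg_distrib]
    rw [hneg]
    set θ : ℝ := 2 * Real.pi * dotR (ω q) τ with hθ
    have h1 : 2 * (Real.pi : ℂ) * Complex.I * ((dotR (ω q) τ : ℝ) : ℂ) = (θ : ℂ) * Complex.I := by
      rw [hθ]; push_cast; ring
    have h2 : 2 * (Real.pi : ℂ) * Complex.I * ((-dotR (ω q) τ : ℝ) : ℂ)
        = -(θ : ℂ) * Complex.I := by
      rw [hθ]; push_cast; ring
    rw [h1, h2]
    have h3 : Complex.exp ((θ : ℂ) * Complex.I) + Complex.exp (-(θ : ℂ) * Complex.I)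
        = 2 * Complex.cos (θ : ℂ) := (Complex.two_cos _).symm
    have h4 : Complex.cos (θ : ℂ) = ((Real.cos θ : ℝ) : ℂ) := (Complex.ofReal_cos θ).symm
    calc ((α q / 2 : ℝ) : ℂ) *
          (Complex.exp ((θ : ℂ) * Complex.I) *
              ((Real.exp (-(2 * Real.pi ^ 2) * (τ ⬝ᵥ (S q *ᵥ τ))) : ℝ) : ℂ) +
            Complex.exp (-(θ : ℂ) * Complex.I) *
              ((Real.exp (-(2 * Real.pi ^ 2) * (τ ⬝ᵥ (S q *ᵥ τ))) : ℝ) : ℂ))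
        = ((α q / 2 : ℝ) : ℂ) *
            ((Complex.exp ((θ : ℂ) * Complex.I) + Complex.exp (-(θ : ℂ) * Complex.I)) *
              ((Real.exp (-(2 * Real.pi ^ 2) * (τ ⬝ᵥ (S q *ᵥ τ))) : ℝ) : ℂ)) := by ring
      _ = _ := by
          rw [h3, h4]
          push_cast
          ring
  rw [Finset.sum_congr rfl fun q _ => hterm q]
  push_cast
  ring
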